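/- The three-qubit NXOR state ψ_NXOR is strongly contextual for the measurements Y and Z at each party: there is no global assignment g : Fin 3 → M → Bool such that for every context c : Fin 3 → M, the induced outcome i ↦ g i (c i) has nonzero amplitude with respect to ψ_NXOR. -/

import Mathlib

noncomputable section

/-- Inner product of two `n`-qubit states `(Fin n → Bool) → ℂ`. -/
def inner' {n : ℕ} (φ ψ : (Fin n → Bool) → ℂ) : ℂ :=
  ∑ s : Fin n → Bool, (starRingEnd ℂ) (φ s) * ψ s

/-- Tensor product of local vectors. -/
def tensor {n : ℕ} (v : Fin n → Bool → ℂ) : (Fin n → Bool) → ℂ :=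
  fun s => ∏ i, v i (s i)

/-- `Y`-measurement eigenvectors: `yvec false = (1/√2, i/√2)`,
`yvec true = (1/√2, -i/√2)`. -/
def yvec (b : Bool) : Bool → ℂ :=
  fun b' => if b' then (if b then -Complex.I else Complex.I) * (Real.sqrt 2 : ℂ)⁻¹
    else (Real.sqrt 2 : ℂ)⁻¹

/-- `Z`-measurement eigenvectors. -/
def evec (b : Bool) : Bool → ℂ := fun b' => if b = b' then 1 else 0

/-- The measurement set: `Y` or `Z` at each site. -/
inductive M | Y | Z

/-- The eigenvector family of each measurement. -/
def mvec : M → Bool → Bool → ℂ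
  | M.Y => yvec
  | M.Z => evec

/-- The amplitude of outcome `o` in context `c` for a 3-qubit state `ψ`. -/
def amp (ψ : (Fin 3 → Bool) → ℂ) (c : Fin 3 → M) (o : Fin 3 → Bool) : ℂ :=
  inner' (tensor fun i => mvec (c i) (o i)) ψ

/-- A global assignment is consistent if its induced outcome is possible in
every context. -/
def consistent (ψ : (Fin 3 → Bool) → ℂ) (g : Fin 3 → M → Bool) : Prop :=
  ∀ c : Fin 3 → M, amp ψ c (fun i => g i (c i)) ≠ 0

/-- The three-qubit NXOR state. -/
def psiNXOR : (Fin 3 → Bool) → ℂ :=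
  fun s => if s 2 = !(Bool.xor (s 0) (s 1)) then (1/2 : ℂ) else 0

/-!
In the basis `𝟙 = (1, 1)`, `σ = (1, -1)` (unnormalised `|+⟩`, `|-⟩`), `ψ_NXOR = (𝟙⊗𝟙⊗𝟙 - σ⊗σ⊗σ)/4`
is a GHZ state. For a `Z`- or `Y`-eigenvector `v` with outcome `o` one has `⟨v, σ⟩ = λ ⟨v, 𝟙⟩`
with `⟨v, 𝟙⟩ ≠ 0` and `λ = (-1)^o`, resp. `λ = i (-1)^o`, so an outcome is possible exactly when
the product of the `λ`'s is not `1`. This forces odd parity in context `ZZZ` and even parity in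
`YYZ`, `YZY`, `ZYY`; but every `Y`-value occurs twice among the three mixed contexts, so their
parities add up to the `ZZZ` parity (Mermin's argument).
-/

open Complex ComplexConjugate

def qubitInner (v w : Bool → ℂ) : ℂ := ∑ b, conj (v b) * w b

def boolSign (b : Bool) : ℂ := if b then -1 else 1

def M.phase : M → ℂ
  | M.Y => I
  | M.Z => 1

lemma boolSign_xor (a b : Bool) : boolSign (xor a b) = boolSign a * boolSign b := by
  cases a <;> cases b <;> norm_num [boolSign]

lemma boolSign_ne_one_iff (b : Bool) : boolSign b ≠ 1 ↔ b = true := by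
  cases b <;> norm_num [boolSign]

lemma neg_boolSign_ne_one_iff (b : Bool) : -boolSign b ≠ 1 ↔ b = false := by
  cases b <;> norm_num [boolSign]

lemma inner'_tensor {n : ℕ} (u v : Fin n → Bool → ℂ) :
    inner' (tensor u) (tensor v) = ∏ i, qubitInner (u i) (v i) := by
  simp only [inner', tensor, qubitInner, map_prod, ← Finset.prod_mul_distrib]
  exact (Fintype.prod_sum fun i b => conj (u i b) * v i b).symm

lemma inner'_sub_div {n : ℕ} (φ ψ₁ ψ₂ : (Fin n → Bool) → ℂ) (z : ℂ) :
    inner' φ (fun s => (ψ₁ s - ψ₂ s) / z) = (inner' φ ψ₁ - inner' φ ψ₂) / z := by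
  simp only [inner', ← Finset.sum_sub_distrib, Finset.sum_div, mul_sub, mul_div_assoc']

lemma psiNXOR_eq (s : Fin 3 → Bool) :
    psiNXOR s = (tensor (fun _ => 1) s - tensor (fun _ => boolSign) s) / 4 := by
  simp only [psiNXOR, tensor, Fin.prod_univ_three]
  cases s 0 <;> cases s 1 <;> cases s 2 <;> norm_num [boolSign]

lemma qubitInner_mvec_boolSign (m : M) (o : Bool) :
    qubitInner (mvec m o) boolSign = m.phase * boolSign o * qubitInner (mvec m o) 1 := by
  cases m <;> cases o <;> simp [qubitInner, mvec, yvec, evec, M.phase, boolSign] <;>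
    linear_combination (√2 : ℂ)⁻¹ * I_mul_I

lemma qubitInner_mvec_one_ne_zero (m : M) (o : Bool) : qubitInner (mvec m o) 1 ≠ 0 := by
  cases m <;> cases o <;> simp [qubitInner, mvec, yvec, evec, Complex.ext_iff]

lemma amp_psiNXOR (c : Fin 3 → M) (o : Fin 3 → Bool) :
    amp psiNXOR c o = (∏ i, qubitInner (mvec (c i) (o i)) 1) *
      (1 - (∏ i, (c i).phase) * ∏ i, boolSign (o i)) / 4 := by
  rw [amp, funext psiNXOR_eq, inner'_sub_div, inner'_tensor, inner'_tensor]
  simp only [qubitInner_mvec_boolSign, Finset.prod_mul_distrib]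
  ring

lemma amp_psiNXOR_ne_zero_iff (c : Fin 3 → M) (o : Fin 3 → Bool) :
    amp psiNXOR c o ≠ 0 ↔ (∏ i, (c i).phase) * boolSign (xor (o 0) (xor (o 1) (o 2))) ≠ 1 := by
  have h : ∏ i, qubitInner (mvec (c i) (o i)) 1 ≠ 0 :=
    Finset.prod_ne_zero_iff.2 fun i _ => qubitInner_mvec_one_ne_zero (c i) (o i)
  rw [boolSign_xor, boolSign_xor, ← mul_assoc (boolSign (o 0)),
    ← Fin.prod_univ_three fun i => boolSign (o i), amp_psiNXOR]
  simp [h, sub_eq_zero, eq_comm (a := (1 : ℂ))]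

lemma xor_mixed_parities (a₀ a₁ a₂ b₀ b₁ b₂ : Bool) :
    xor (xor a₀ (xor a₁ b₂)) (xor (xor a₀ (xor b₁ a₂)) (xor b₀ (xor a₁ a₂))) =
      xor b₀ (xor b₁ b₂) := by
  revert a₀ a₁ a₂ b₀ b₁ b₂
  decide

/-- The NXOR state is strongly contextual for `Y`/`Z` measurements: no global
assignment induces a possible outcome in every context. -/
theorem nxor_strongly_contextual :
    ¬ ∃ g : Fin 3 → M → Bool, consistent psiNXOR g := by
  rintro ⟨g, hg⟩
  have h c := (amp_psiNXOR_ne_zero_iff c _).1 (hg c)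
  have hYYZ := h ![M.Y, M.Y, M.Z]
  have hYZY := h ![M.Y, M.Z, M.Y]
  have hZYY := h ![M.Z, M.Y, M.Y]
  have hZZZ := h ![M.Z, M.Z, M.Z]
  simp only [Fin.prod_univ_three, M.phase, Matrix.cons_val_zero, Matrix.cons_val_one,
    Matrix.cons_val_two, Matrix.head_cons, Matrix.tail_cons, I_mul_I, mul_one, one_mul,
    neg_one_mul, neg_boolSign_ne_one_iff, boolSign_ne_one_iff] at hYYZ hYZY hZYY hZZZ
  have parity := xor_mixed_parities (g 0 M.Y) (g 1 M.Y) (g 2 M.Y) (g 0 M.Z) (g 1 M.Z) (g 2 M.Z)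
  rw [hYYZ, hYZY, hZYY, hZZZ] at parity
  exact absurd parity (by decide)
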